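/- arXiv:2405.13836 — 2 statements merged into one kernel-verified Lean document; each statement's English description precedes it below -/
import Mathlib

section
/- Let f, g : X → Y be continuous maps between compact metric ANR spaces and let A ⊆ X be a subset. If the restrictions f|_A and g|_A are homotopic, then there exists an open set U with A ⊆ U ⊆ X such that f|_U and g|_U are homotopic. -/
/-!
Embed `Y` in a Banach space `E` (Kuratowski); being an ANR, `Y` is a retract of an open set
`M ⊆ E`, which by compactness contains the closed `ε`-neighbourhood of `Y`. The homotopy on `A`
is a continuous family `a ↦ Φ a` of paths in `E`; averaging these paths with a partition of unity
on a neighbourhood `U` of `A` gives a family `x ↦ Ψ x` of paths, each of which is `ε`-close to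
some `Φ a` with `f a`, `g a` close to `f x`, `g x`. Joining `f x` to `Ψ x 0` and `Ψ x 1` to
`g x` by segments yields a homotopy from `f|U` to `g|U` inside `M`, and the retraction pushes it
back into `Y`.
-/

universe u v w

/-- A metrizable space `Y` is an ANR if for every metrizable space `W`, every closed
subset `C ⊆ W` and every continuous map `g : C → Y`, there exist an open set `U` with
`C ⊆ U ⊆ W` and a continuous map `G : U → Y` extending `g`. -/
def IsANR (Y : Type v) [TopologicalSpace Y] : Prop :=
  TopologicalSpace.MetrizableSpace Y ∧
  ∀ (W : Type w) [TopologicalSpace W] [TopologicalSpace.MetrizableSpace W]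
    (C : Set W), IsClosed C → ∀ g : C(C, Y),
    ∃ U : Set W, IsOpen U ∧ C ⊆ U ∧
      ∃ G : C(U, Y), ∀ (w : W) (hC : w ∈ C) (hU : w ∈ U), G ⟨w, hU⟩ = g ⟨w, hC⟩

open Metric Set Topology TopologicalSpace unitInterval ContinuousMap

theorem IsANR.exists_retraction_of_isClosedEmbedding {Y : Type v} [TopologicalSpace Y]
    (hY : IsANR.{v, w} Y) {W : Type w} [TopologicalSpace W] [MetrizableSpace W] {e : Y → W}
    (he : IsClosedEmbedding e) :
    ∃ M : Set W, IsOpen M ∧ range e ⊆ M ∧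
      ∃ r : C(M, Y), ∀ y (hy : e y ∈ M), r ⟨e y, hy⟩ = y := by
  obtain ⟨M, hM, heM, r, hr⟩ := hY.2 W (range e) he.isClosed_range
    ⟨he.toHomeomorph.symm, he.toHomeomorph.symm.continuous⟩
  exact ⟨M, hM, heM, r, fun y hy => (hr _ (mem_range_self y) hy).trans
    (he.toHomeomorph_symm_apply y)⟩

theorem exists_continuous_approx_on_nhds {X F : Type*} [MetricSpace X] [NormedAddCommGroup F]
    [NormedSpace ℝ F] {A : Set X} (Φ : C(A, F)) {ε : ℝ} (hε : 0 < ε) {R : X → A → Prop}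
    (hR : ∀ a : A, ∀ᶠ x in 𝓝 (a : X), R x a) :
    ∃ U : Set X, IsOpen U ∧ A ⊆ U ∧
      ∃ Ψ : C(U, F), ∀ x : U, ∃ a : A, R x a ∧ Ψ x ∈ closedBall (Φ a) ε := by
  have radius : ∀ a : A, ∃ r > 0, (∀ x : X, dist x a < r → R x a) ∧
      ∀ a' : A, dist a' a < 2 * r → dist (Φ a') (Φ a) ≤ ε := by
    intro a
    obtain ⟨r₁, hr₁, hR₁⟩ := Metric.eventually_nhds_iff.1 (hR a)
    obtain ⟨r₂, hr₂, hΦ₂⟩ := Metric.continuousAt_iff.1 Φ.continuous.continuousAt ε hε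
    refine ⟨min r₁ (r₂ / 2), by positivity, fun x hx => hR₁ (hx.trans_le (min_le_left _ _)),
      fun a' ha' => (hΦ₂ ?_).le⟩
    linarith [min_le_right r₁ (r₂ / 2), Subtype.dist_eq a' a]
  choose ρ hρ hρR hρΦ using radius
  set U : Set X := ⋃ a : A, ball (a : X) (ρ a)
  obtain ⟨p, hp⟩ := PartitionOfUnity.exists_isSubordinate isClosed_univ
    (fun a : A => ((↑) : U → X) ⁻¹' ball a (ρ a))
    (fun _ => isOpen_ball.preimage continuous_subtype_val)
    (fun x _ => by simpa [U] using x.2)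
  refine ⟨U, isOpen_iUnion fun _ => isOpen_ball,
    fun x hx => mem_iUnion.2 ⟨⟨x, hx⟩, mem_ball_self (hρ _)⟩,
    ⟨fun x => ∑ᶠ a, p a x • Φ a, p.continuous_finsum_smul fun _ _ _ => continuousAt_const⟩,
    fun x => ?_⟩
  have hball : ∀ a, p a x ≠ 0 → dist (x : X) a < ρ a := fun a ha => hp a (subset_tsupport _ ha)
  obtain ⟨a₀, ha₀, hmax⟩ := Set.exists_max_image {a | p a x ≠ 0} ρ
    (p.locallyFinite.point_finite x)
    (let ⟨a, ha⟩ := p.exists_pos (mem_univ x); ⟨a, ha.ne'⟩)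
  -- `a₀` has the largest radius among the balls around `x`, so their centres lie in
  -- `ball a₀ (2 * ρ a₀)`.
  refine ⟨a₀, hρR a₀ (x : X) (hball a₀ ha₀),
    p.finsum_smul_mem_convex (g := fun a _ => Φ a) (mem_univ x) (fun a ha => ?_)
      (convex_closedBall _ _)⟩
  have := dist_triangle_left (a : X) a₀ x
  exact mem_closedBall.2 (hρΦ a₀ a
    (by linarith [hball a ha, hball a₀ ha₀, hmax a ha, Subtype.dist_eq a a₀]))

namespace ContinuousMap

variable {Z : Type*} [TopologicalSpace Z]

theorem homotopicWith_of_segment_subset {E : Type*} [AddCommGroup E] [TopologicalSpace E]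
    [IsTopologicalAddGroup E] [Module ℝ E] [ContinuousSMul ℝ E] {M : Set E} {F₀ F₁ : C(Z, E)}
    (h : ∀ z, segment ℝ (F₀ z) (F₁ z) ⊆ M) : HomotopicWith F₀ F₁ fun G => ∀ z, G z ∈ M :=
  ⟨{ Homotopy.affine F₀ F₁ with
    prop' := fun t z => h z (Path.range_segment (F₀ z) (F₁ z) ▸ mem_range_self t) }⟩

theorem homotopicWith_of_continuous_paths {T : Type*} [TopologicalSpace T] {S : Set T}
    {F₀ F₁ : C(Z, T)} (P : C(Z, C(I, T))) (h₀ : ∀ z, P z 0 = F₀ z) (h₁ : ∀ z, P z 1 = F₁ z)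
    (hP : ∀ z t, P z t ∈ S) : HomotopicWith F₀ F₁ fun G => ∀ z, G z ∈ S :=
  ⟨{ toContinuousMap := P.uncurry.comp prodSwap
     map_zero_left := h₀
     map_one_left := h₁
     prop' := fun t z => hP z t }⟩

theorem Homotopic.of_homotopicWith_comp_of_retraction {Y T : Type*} [TopologicalSpace Y]
    [TopologicalSpace T] {j : C(Y, T)} {M : Set T} (r : C(M, Y))
    (hr : ∀ y (hy : j y ∈ M), r ⟨j y, hy⟩ = y) {F₀ F₁ : C(Z, Y)}
    (h : HomotopicWith (j.comp F₀) (j.comp F₁) fun G => ∀ z, G z ∈ M) : F₀.Homotopic F₁ :=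
  h.map fun H =>
    { toFun := fun q => r ⟨H q, H.prop q.1 q.2⟩
      continuous_toFun := r.continuous.comp (H.continuous.subtype_mk _)
      map_zero_left := fun z => by simp [hr]
      map_one_left := fun z => by simp [hr] }

end ContinuousMap

theorem homotopic_restrict_nhds_of_retraction {X Y E : Type*} [MetricSpace X] [TopologicalSpace Y]
    [NormedAddCommGroup E] [NormedSpace ℝ E] {j : C(Y, E)} {M : Set E} (r : C(M, Y))
    (hr : ∀ y (hy : j y ∈ M), r ⟨j y, hy⟩ = y) {ε : ℝ} (hε : 0 < ε)
    (hM : ∀ y, closedBall (j y) ε ⊆ M) {f g : C(X, Y)} {A : Set X}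
    (h : (f.restrict A).Homotopic (g.restrict A)) :
    ∃ U : Set X, IsOpen U ∧ A ⊆ U ∧ (f.restrict U).Homotopic (g.restrict U) := by
  obtain ⟨H⟩ := h
  let Φ : C(A, C(I, E)) := ((j.comp H.toContinuousMap).comp prodSwap).curry
  obtain ⟨U, hU, hAU, Ψ, hΨ⟩ := exists_continuous_approx_on_nhds Φ hε
    (R := fun x a => j (f x) ∈ closedBall (j (f a)) ε ∧ j (g x) ∈ closedBall (j (g a)) ε)
    fun a => ((j.comp f).continuous.continuousAt.eventually_mem (closedBall_mem_nhds _ hε)).and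
      ((j.comp g).continuous.continuousAt.eventually_mem (closedBall_mem_nhds _ hε))
  refine ⟨U, hU, hAU, Homotopic.of_homotopicWith_comp_of_retraction r hr ?_⟩
  choose a hfg hΨa using hΨ
  have hΦM : ∀ x t, closedBall (Φ (a x) t) ε ⊆ M := fun x t => hM _
  have hΨΦ : ∀ x t, Ψ x t ∈ closedBall (Φ (a x) t) ε :=
    fun x t => (dist_apply_le_dist t).trans (hΨa x)
  have hΦ₀ : ∀ x, Φ (a x) 0 = j (f (a x)) := fun x => congrArg j (H.apply_zero (a x))
  have hΦ₁ : ∀ x, Φ (a x) 1 = j (g (a x)) := fun x => congrArg j (H.apply_one (a x))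
  let Ψ₀ : C(U, E) := ⟨fun x => Ψ x 0, by fun_prop⟩
  let Ψ₁ : C(U, E) := ⟨fun x => Ψ x 1, by fun_prop⟩
  have from_f : HomotopicWith (j.comp (f.restrict U)) Ψ₀ fun G => ∀ x, G x ∈ M :=
    homotopicWith_of_segment_subset fun x =>
      ((convex_closedBall _ _).segment_subset (hΦ₀ x ▸ (hfg x).1) (hΨΦ x 0)).trans (hΦM x 0)
  have along_Ψ : HomotopicWith Ψ₀ Ψ₁ fun G => ∀ x, G x ∈ M :=
    homotopicWith_of_continuous_paths Ψ (fun _ => rfl) (fun _ => rfl) fun x t =>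
      hΦM x t (hΨΦ x t)
  have to_g : HomotopicWith Ψ₁ (j.comp (g.restrict U)) fun G => ∀ x, G x ∈ M :=
    homotopicWith_of_segment_subset fun x =>
      ((convex_closedBall _ _).segment_subset (hΨΦ x 1) (hΦ₁ x ▸ (hfg x).2)).trans (hΦM x 1)
  exact (from_f.trans along_Ψ).trans to_g

theorem homotopic_on_open_neighborhood_general (X : Type u) (Y : Type v) [MetricSpace X]
    [MetricSpace Y] [CompactSpace Y] (hY : IsANR Y)
    (f g : C(X, Y)) (A : Set X) (h : (f.restrict A).Homotopic (g.restrict A)) :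
    ∃ U : Set X, IsOpen U ∧ A ⊆ U ∧ (f.restrict U).Homotopic (g.restrict U) := by
  -- `ULift` moves `ℓ^∞` into the universe over which `IsANR` quantifies.
  let j : C(Y, ULift (lp (fun _ : ℕ => ℝ) ⊤)) := ⟨ULift.up ∘ kuratowskiEmbedding Y,
    continuous_uliftUp.comp (kuratowskiEmbedding.isometry Y).continuous⟩
  have hj : IsClosedEmbedding j := j.continuous.isClosedEmbedding
    (ULift.up_injective.comp (kuratowskiEmbedding.isometry Y).injective)
  obtain ⟨M, hM, hjM, r, hr⟩ := hY.exists_retraction_of_isClosedEmbedding hj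
  obtain ⟨δ, hδ, hδM⟩ := (isCompact_range j.continuous).exists_cthickening_subset_open hM hjM
  exact homotopic_restrict_nhds_of_retraction r hr hδ
    (fun y => (closedBall_subset_cthickening (mem_range_self y) δ).trans hδM) h

/-- If `f, g : X → Y` are maps between compact metric ANR spaces which are homotopic on a
subset `A ⊆ X`, then they are homotopic on some open neighbourhood of `A`. -/
theorem homotopic_on_open_neighborhood (X : Type u) (Y : Type v) [MetricSpace X]
    [CompactSpace X] [MetricSpace Y] [CompactSpace Y] (hX : IsANR X) (hY : IsANR Y)
    (f g : C(X, Y)) (A : Set X) (h : (f.restrict A).Homotopic (g.restrict A)) :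
    ∃ U : Set X, IsOpen U ∧ A ⊆ U ∧ (f.restrict U).Homotopic (g.restrict U) :=
  homotopic_on_open_neighborhood_general X Y hY f g A h
end

section
/- (Pavešić) Let f : X → Y be a fibration between compact ANR spaces, with f a continuous surjection between path-connected spaces. Then tc(f) is the smallest nonnegative integer n for which X × Y admits a cover by n+1 arbitrary (not necessarily open) subsets on each of which there exists a continuous local section of π_f. -/
/-!
A set `A ⊆ X × Y` carrying a section of `π_f` can be enlarged to an open set carrying one.
Embed `X` and `Y` isometrically in `ℓ^∞`; as compact ANRs they are retracts of uniform
thickenings of their images. Averaging the paths of the section with a partition of unity on a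
neighbourhood `V` of `A` and retracting gives paths `e v` with `e v 0` close to `v.1` and
`f (e v 1)` close to `v.2`. Nearby points of such a space are joined by retracted segments,
continuously in the endpoints: prepending such a segment fixes the start of `e v`, and lifting
the short homotopy in `Y` from `f (e v 1)` to `v.2` through the fibration fixes its end. Given an
open cover `V₀, …, Vₙ` with sections, `U_k = V₀ ∪ ⋯ ∪ V_{k-1}` is an admissible
filtration; conversely the strata of a filtration cover `X × Y`.
-/

universe u v w

/-- A continuous map `p : E → B` is a (Hurewicz) fibration if it has the homotopy lifting
property with respect to every topological space. -/
def IsFibration {E : Type u} {B : Type v} [TopologicalSpace E] [TopologicalSpace B]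
    (p : C(E, B)) : Prop :=
  ∀ (Z : Type w) [TopologicalSpace Z] (h : C(Z, E)) (H : C(Z × unitInterval, B)),
    (∀ z, H (z, 0) = p (h z)) →
    ∃ H' : C(Z × unitInterval, E), (∀ z, H' (z, 0) = h z) ∧ ∀ q, p (H' q) = H q

/-- A subset `A ⊆ X × Y` admits a continuous local section of
`π_f : X^I → X × Y`, `α ↦ (α(0), f(α(1)))`. -/
def HasLocalSectionPi {X : Type u} {Y : Type v} [TopologicalSpace X] [TopologicalSpace Y]
    (f : C(X, Y)) (A : Set (X × Y)) : Prop :=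
  ∃ s : C(A, C(unitInterval, X)), ∀ a : A, ((s a) 0, f ((s a) 1)) = (a : X × Y)

open scoped ENat

/-- Pavešić's topological complexity of `f`: the sectional number `sn(π_f)`, i.e. the
least `n` such that there is a nested sequence of open sets
`∅ = U₀ ⊆ U₁ ⊆ ⋯ ⊆ U_{n+1} = X × Y` with each difference `U_i \ U_{i-1}` admitting a
continuous local section of `π_f`. -/
noncomputable def tcPav {X : Type u} {Y : Type v} [TopologicalSpace X]
    [TopologicalSpace Y] (f : C(X, Y)) : ℕ∞ :=
  sInf {m : ℕ∞ | ∃ n : ℕ, m = n ∧ ∃ U : Fin (n + 2) → Set (X × Y),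
    (∀ i, IsOpen (U i)) ∧ U 0 = ∅ ∧ U (Fin.last (n + 1)) = Set.univ ∧
    (∀ i j, i ≤ j → U i ⊆ U j) ∧
    ∀ i : Fin (n + 1), HasLocalSectionPi f (U i.succ \ U i.castSucc)}

open Set Metric TopologicalSpace unitInterval
open scoped lp ENNReal

universe w₁ w₂

theorem HasLocalSectionPi.mono {X : Type u} {Y : Type v} [TopologicalSpace X]
    [TopologicalSpace Y] {f : C(X, Y)} {A B : Set (X × Y)} (h : HasLocalSectionPi f A)
    (hBA : B ⊆ A) : HasLocalSectionPi f B := by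
  obtain ⟨s, hs⟩ := h
  exact ⟨s.comp ⟨inclusion hBA, continuous_inclusion hBA⟩, fun b => hs (inclusion hBA b)⟩

theorem exists_path_family_trans {T X : Type*} [TopologicalSpace T] [TopologicalSpace X]
    (a b : C(T, C(I, X))) (hab : ∀ t, a t 1 = b t 0) :
    ∃ c : C(T, C(I, X)), ∀ t, c t 0 = a t 0 ∧ c t 1 = b t 1 := by
  let γ₁ : ∀ t, Path (a t 0) (a t 1) := fun t => ⟨a t, rfl, rfl⟩
  let γ₂ : ∀ t, Path (a t 1) (b t 1) := fun t => ⟨b t, (hab t).symm, rfl⟩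
  exact ⟨ContinuousMap.curry ⟨_, Path.trans_continuous_family γ₁ a.uncurry.continuous
    γ₂ b.uncurry.continuous⟩,
    fun t => ⟨((γ₁ t).trans (γ₂ t)).source, ((γ₁ t).trans (γ₂ t)).target⟩⟩

theorem IsFibration.exists_lift {E : Type u} {B : Type v} [TopologicalSpace E]
    [TopologicalSpace B] {p : C(E, B)} (hp : IsFibration.{u, v, w} p) {Z : Type*}
    [TopologicalSpace Z] [T3Space Z] [SecondCountableTopology Z] (h : C(Z, E))
    (H : C(Z × I, B)) (hH : ∀ z, H (z, 0) = p (h z)) :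
    ∃ H' : C(Z × I, E), (∀ z, H' (z, 0) = h z) ∧ ∀ q, p (H' q) = H q := by
  obtain ⟨φ, hφ⟩ := exists_embedding_l_infty Z
  let ψ : ULift.{w} (range φ) ≃ₜ Z := Homeomorph.ulift.trans hφ.toHomeomorph.symm
  obtain ⟨H', hH'0, hH'⟩ := hp _ (h.comp ψ)
    (H.comp ((ψ : C(ULift.{w} (range φ), Z)).prodMap (.id I))) fun z => hH (ψ z)
  refine ⟨H'.comp ((ψ.symm : C(Z, ULift.{w} (range φ))).prodMap (.id I)), fun z => ?_,
    fun ⟨z, t⟩ => ?_⟩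
  · simpa using hH'0 (ψ.symm z)
  · simpa using hH' (ψ.symm z, t)

theorem exists_isOpen_superset_approx {Z E : Type*} [MetricSpace Z] [NormedAddCommGroup E]
    [NormedSpace ℝ E] {A : Set Z} (s : C(A, E)) {ε : ℝ} (hε : 0 < ε) :
    ∃ V : Set Z, IsOpen V ∧ A ⊆ V ∧
      ∃ g : C(V, E), ∀ v : V, ∃ a : A, dist (a : Z) v < ε ∧ dist (g v) (s a) ≤ ε := by
  have hrad : ∀ a : A, ∃ r > 0, r ≤ ε ∧
      ∀ b : A, dist b a < r → dist (s b) (s a) < ε := by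
    intro a
    obtain ⟨r, hr, hs⟩ := Metric.continuous_iff.1 s.continuous a ε hε
    exact ⟨min r ε, lt_min hr hε, min_le_right _ _,
      fun b hb => hs b (hb.trans_le (min_le_left _ _))⟩
  choose r hr hrε hs using hrad
  refine ⟨⋃ a : A, ball (a : Z) (r a / 2), isOpen_iUnion fun _ => isOpen_ball,
    fun a ha => mem_iUnion.2 ⟨⟨a, ha⟩, mem_ball_self (half_pos (hr _))⟩, ?_⟩
  obtain ⟨φ, hφ⟩ := PartitionOfUnity.exists_isSubordinate isClosed_univ
    (fun a : A => {v : ⋃ a : A, ball (a : Z) (r a / 2) | dist (v : Z) a < r a / 2})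
    (fun a => isOpen_lt (by fun_prop) continuous_const)
    (fun v _ => by simpa [mem_iUnion] using v.2)
  refine ⟨⟨fun v => ∑ᶠ a, φ a v • s a,
    φ.continuous_finsum_smul fun _ _ _ => continuousAt_const⟩, fun v => ?_⟩
  have hnear : ∀ a, φ a v ≠ 0 → dist (v : Z) a < r a / 2 := fun a ha =>
    hφ a (subset_tsupport _ ha)
  -- the active index of largest radius sees all the other active indices within its radius
  obtain ⟨a₀, ha₀⟩ := φ.exists_pos (mem_univ v)
  obtain ⟨a₁, ha₁, hmax⟩ := exists_max_image {a | φ a v ≠ 0} r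
    (φ.locallyFinite.point_finite v) ⟨a₀, ha₀.ne'⟩
  refine ⟨a₁, ?_, ?_⟩
  · rw [dist_comm]
    linarith [hnear a₁ ha₁, hrε a₁]
  · refine mem_closedBall.1 (φ.finsum_smul_mem_convex (g := fun a _ => s a) (mem_univ v)
      (fun a ha => (hs a₁ a ?_).le) (convex_closedBall _ _))
    calc dist (a : Z) a₁ ≤ dist (a : Z) v + dist (v : Z) a₁ := dist_triangle _ _ _
      _ < r a / 2 + r a₁ / 2 :=
          add_lt_add (by rw [dist_comm]; exact hnear a ha) (hnear a₁ ha₁)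
      _ ≤ r a₁ := by linarith [hmax a ha]

structure LInftyNhdRetract (X : Type*) [MetricSpace X] where
  embed : X → ℓ^∞(ℕ, ℝ)
  isometry_embed : Isometry embed
  radius : ℝ
  radius_pos : 0 < radius
  retract : C(thickening radius (range embed), X)
  retract_embed : ∀ x h, retract ⟨embed x, h⟩ = x

theorem IsANR.nonempty_lInftyNhdRetract {X : Type u} [MetricSpace X] [CompactSpace X]
    (hX : IsANR.{u, w} X) : Nonempty (LInftyNhdRetract X) := by
  obtain ⟨κ, hκ⟩ := KuratowskiEmbedding.exists_isometric_embedding X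
  have hK : IsCompact (range κ) := isCompact_range hκ.continuous
  let g : C(ULift.down ⁻¹' range κ, X) :=
    ⟨fun c => hκ.isometryEquivOnRange.symm ⟨c.1.down, c.2⟩, by fun_prop⟩
  obtain ⟨U, hU, hKU, G, hG⟩ :=
    hX.2 (ULift.{w} ℓ^∞(ℕ, ℝ)) _ (hK.isClosed.preimage continuous_uliftDown) g
  obtain ⟨ε, hε, hεU⟩ :=
    hK.exists_thickening_subset_open (hU.preimage continuous_uliftUp) fun _ hz => hKU hz
  refine ⟨⟨κ, hκ, ε, hε, G.comp ⟨fun z => ⟨ULift.up z.1, hεU z.2⟩, by fun_prop⟩,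
    fun x _ => ?_⟩⟩
  exact (hG _ (mem_range_self x) _).trans (hκ.isometryEquivOnRange.symm_apply_apply x)

namespace LInftyNhdRetract

variable {X : Type*} [MetricSpace X] (R : LInftyNhdRetract X)

theorem retract_of_eq {x : X} {ν : ℓ^∞(ℕ, ℝ)}
    (h : ν ∈ thickening R.radius (range R.embed)) (hν : ν = R.embed x) :
    R.retract ⟨ν, h⟩ = x := by
  subst hν
  exact R.retract_embed x h

theorem exists_dist_retract_lt [CompactSpace X] {δ : ℝ} (hδ : 0 < δ) :
    ∃ η > 0, ∀ (x : X) (ν) (h : ν ∈ thickening R.radius (range R.embed)),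
      dist ν (R.embed x) < η → dist (R.retract ⟨ν, h⟩) x < δ := by
  let ι : X → thickening R.radius (range R.embed) := fun x =>
    ⟨R.embed x, self_subset_thickening R.radius_pos _ (mem_range_self x)⟩
  have hK : IsCompact (range ι) := isCompact_range (R.isometry_embed.continuous.subtype_mk _)
  obtain ⟨η, hη, hmem⟩ := Metric.mem_uniformity_dist.1
    (hK.uniformContinuousAt_of_continuousAt R.retract
      (fun _ _ => R.retract.continuous.continuousAt) (Metric.dist_mem_uniformity hδ))
  refine ⟨η, hη, fun x ν h hν => ?_⟩
  have : dist (R.retract (ι x)) (R.retract ⟨ν, h⟩) < δ :=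
    hmem (a := ι x) (b := ⟨ν, h⟩) (by rwa [Subtype.dist_eq, dist_comm]) (mem_range_self x)
  rwa [R.retract_embed, dist_comm] at this

theorem exists_path_family {T : Type*} [TopologicalSpace T] {a b : T → X} (ha : Continuous a)
    (hb : Continuous b) (hab : ∀ t, dist (a t) (b t) < R.radius) :
    ∃ γ : C(T, C(I, X)), ∀ t, γ t 0 = a t ∧ γ t 1 = b t := by
  let seg : T × I → ℓ^∞(ℕ, ℝ) := fun p =>
    AffineMap.lineMap (R.embed (a p.1)) (R.embed (b p.1)) (p.2 : ℝ)
  have hseg : ∀ p, seg p ∈ thickening R.radius (range R.embed) := fun p =>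
    mem_thickening_iff.2 ⟨_, mem_range_self (a p.1), by
      rw [dist_lineMap_left, R.isometry_embed.dist_eq, Real.norm_of_nonneg p.2.2.1]
      exact (mul_le_of_le_one_left dist_nonneg p.2.2.2).trans_lt (hab p.1)⟩
  have hcont : Continuous seg := by
    simp only [seg, AffineMap.lineMap_apply_module']
    have := R.isometry_embed.continuous
    fun_prop
  refine ⟨ContinuousMap.curry
    (R.retract.comp ⟨fun p => ⟨seg p, hseg p⟩, hcont.subtype_mk _⟩),
    fun t => ⟨R.retract_of_eq _ ?_, R.retract_of_eq _ ?_⟩⟩ <;> simp [seg]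

end LInftyNhdRetract

theorem LInftyNhdRetract.exists_isOpen_superset_approx {X : Type*} [MetricSpace X]
    [CompactSpace X] (R : LInftyNhdRetract X) {Z K : Type*} [MetricSpace Z] [TopologicalSpace K]
    [CompactSpace K] {A : Set Z} (s : C(A, C(K, X))) {δ : ℝ} (hδ : 0 < δ) :
    ∃ V : Set Z, IsOpen V ∧ A ⊆ V ∧ ∃ e : C(V, C(K, X)),
      ∀ v : V, ∃ a : A, dist (a : Z) v < δ ∧ ∀ k, dist (e v k) (s a k) < δ := by
  obtain ⟨η, hη, hR⟩ := R.exists_dist_retract_lt hδ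
  obtain ⟨ε, hε, hεm⟩ := exists_between (lt_min (lt_min hδ hη) R.radius_pos)
  have hεδ : ε < δ := hεm.trans_le ((min_le_left _ _).trans (min_le_left _ _))
  have hεη : ε < η := hεm.trans_le ((min_le_left _ _).trans (min_le_right _ _))
  have hεR : ε < R.radius := hεm.trans_le (min_le_right _ _)
  let embedPath : C(C(K, X), C(K, ℓ^∞(ℕ, ℝ))) :=
    ⟨_, ContinuousMap.continuous_postcomp ⟨R.embed, R.isometry_embed.continuous⟩⟩
  obtain ⟨V, hV, hAV, g, hg⟩ := _root_.exists_isOpen_superset_approx (embedPath.comp s) hε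
  have hclose : ∀ v : V, ∃ a : A, dist (a : Z) v < ε ∧
      ∀ k, dist (g v k) (R.embed (s a k)) < min η R.radius := fun v => by
    obtain ⟨a, hav, hga⟩ := hg v
    exact ⟨a, hav, fun k => ((ContinuousMap.dist_apply_le_dist k).trans hga).trans_lt
      (lt_min hεη hεR)⟩
  have hmem : ∀ v k, g v k ∈ thickening R.radius (range R.embed) := fun v k => by
    obtain ⟨a, -, ha⟩ := hclose v
    exact mem_thickening_iff.2 ⟨_, mem_range_self _, (ha k).trans_le (min_le_right _ _)⟩
  refine ⟨V, hV, hAV, ContinuousMap.curry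
    (R.retract.comp ⟨fun p => ⟨g p.1 p.2, hmem p.1 p.2⟩, by fun_prop⟩), fun v => ?_⟩
  obtain ⟨a, hav, ha⟩ := hclose v
  exact ⟨a, hav.trans hεδ, fun k => hR _ _ _ ((ha k).trans_le (min_le_left _ _))⟩

theorem HasLocalSectionPi.exists_isOpen_superset_approx {X Y : Type*} [MetricSpace X]
    [CompactSpace X] [MetricSpace Y] (R : LInftyNhdRetract X) {f : C(X, Y)} {A : Set (X × Y)}
    (hA : HasLocalSectionPi f A) {δ : ℝ} (hδ : 0 < δ) :
    ∃ V : Set (X × Y), IsOpen V ∧ A ⊆ V ∧ ∃ e : C(V, C(I, X)),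
      ∀ v : V, dist (e v 0) (v : X × Y).1 < δ ∧ dist (f (e v 1)) (v : X × Y).2 < δ := by
  obtain ⟨s, hs⟩ := hA
  obtain ⟨ηf, hηf, hf⟩ := Metric.uniformContinuous_iff.1
    (CompactSpace.uniformContinuous_of_continuous f.continuous) _ (half_pos hδ)
  obtain ⟨V, hV, hAV, e, he⟩ := R.exists_isOpen_superset_approx s (lt_min (half_pos hδ) hηf)
  refine ⟨V, hV, hAV, e, fun v => ?_⟩
  obtain ⟨a, hav, hea⟩ := he v
  obtain ⟨hav₁, hav₂⟩ : dist (a : X × Y).1 (v : X × Y).1 < δ / 2 ∧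
      dist (a : X × Y).2 (v : X × Y).2 < δ / 2 := by
    rw [← max_lt_iff, ← Prod.dist_eq]
    exact hav.trans_le (min_le_left _ _)
  obtain ⟨hs₀, hs₁⟩ : s a 0 = (a : X × Y).1 ∧ f (s a 1) = (a : X × Y).2 :=
    Prod.ext_iff.1 (hs a)
  constructor
  · calc _ ≤ dist (e v 0) (s a 0) + dist (s a 0) (v : X × Y).1 := dist_triangle _ _ _
      _ < δ / 2 + δ / 2 := add_lt_add ((hea 0).trans_le (min_le_left _ _)) (hs₀ ▸ hav₁)
      _ = δ := add_halves δ
  · calc _ ≤ dist (f (e v 1)) (f (s a 1)) + dist (f (s a 1)) (v : X × Y).2 :=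
          dist_triangle _ _ _
      _ < δ / 2 + δ / 2 :=
          add_lt_add (hf ((hea 1).trans_le (min_le_right _ _))) (hs₁ ▸ hav₂)
      _ = δ := add_halves δ

theorem hasLocalSectionPi_of_forall_dist_lt {X : Type u} {Y : Type v} [MetricSpace X]
    [MetricSpace Y] [SecondCountableTopology X] [SecondCountableTopology Y]
    (RX : LInftyNhdRetract X) (RY : LInftyNhdRetract Y) {f : C(X, Y)}
    (hf : IsFibration.{u, v, w} f) {V : Set (X × Y)} (e : C(V, C(I, X)))
    (he₀ : ∀ v : V, dist (e v 0) (v : X × Y).1 < RX.radius)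
    (he₁ : ∀ v : V, dist (f (e v 1)) (v : X × Y).2 < RY.radius) :
    HasLocalSectionPi f V := by
  obtain ⟨γ, hγ⟩ := RX.exists_path_family (a := fun v : V => (v : X × Y).1)
    (b := fun v => e v 0) (by fun_prop) (by fun_prop) fun v => by rw [dist_comm]; exact he₀ v
  obtain ⟨e', he'⟩ := exists_path_family_trans γ e fun v => (hγ v).2
  obtain ⟨H, hH⟩ := RY.exists_path_family (a := fun v => f (e' v 1))
    (b := fun v : V => (v : X × Y).2) (by fun_prop) (by fun_prop)
    fun v => by rw [(he' v).2]; exact he₁ v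
  obtain ⟨H', hH'₀, hH'⟩ := hf.exists_lift ⟨fun v => e' v 1, by fun_prop⟩ H.uncurry
    fun v => (hH v).1
  obtain ⟨c, hc⟩ := exists_path_family_trans e' H'.curry fun v => (hH'₀ v).symm
  refine ⟨c, fun v => Prod.ext ?_ ?_⟩
  · rw [(hc v).1, (he' v).1, (hγ v).1]
  · rw [(hc v).2, ContinuousMap.curry_apply, hH']
    exact (hH v).2

theorem HasLocalSectionPi.exists_isOpen_superset {X : Type u} {Y : Type v} [TopologicalSpace X]
    [TopologicalSpace Y] [CompactSpace X] [CompactSpace Y] (hX : IsANR.{u, w₁} X)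
    (hY : IsANR.{v, w₂} Y) {f : C(X, Y)} (hf : IsFibration.{u, v, w} f) {A : Set (X × Y)}
    (hA : HasLocalSectionPi f A) : ∃ V, IsOpen V ∧ A ⊆ V ∧ HasLocalSectionPi f V := by
  have := hX.1
  have := hY.1
  let := metrizableSpaceMetric X
  let := metrizableSpaceMetric Y
  obtain ⟨RX⟩ := hX.nonempty_lInftyNhdRetract
  obtain ⟨RY⟩ := hY.nonempty_lInftyNhdRetract
  obtain ⟨V, hV, hAV, e, he⟩ :=
    hA.exists_isOpen_superset_approx RX (lt_min RX.radius_pos RY.radius_pos)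
  exact ⟨V, hV, hAV, hasLocalSectionPi_of_forall_dist_lt RX RY hf e
    (fun v => (he v).1.trans_le (min_le_left _ _)) fun v => (he v).2.trans_le (min_le_right _ _)⟩

theorem iUnion_succ_sdiff_castSucc_eq_univ {α : Type*} {n : ℕ} (U : Fin (n + 2) → Set α)
    (h₀ : U 0 = ∅) (hlast : U (Fin.last (n + 1)) = univ) :
    ⋃ i : Fin (n + 1), U i.succ \ U i.castSucc = univ := by
  refine eq_univ_of_forall fun z => ?_
  by_contra hz
  simp only [mem_iUnion, mem_sdiff, not_exists, not_and, not_not] at hz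
  have hU : ∀ k, z ∉ U k := by
    intro k
    induction k using Fin.induction with
    | zero => simp [h₀]
    | succ i ih => exact fun h => ih (hz i h)
  exact hU _ (hlast ▸ mem_univ z)

theorem tcPav_le_of_isOpen_cover {X : Type u} {Y : Type v} [TopologicalSpace X]
    [TopologicalSpace Y] {f : C(X, Y)} {n : ℕ} (V : Fin (n + 1) → Set (X × Y))
    (hV : ∀ i, IsOpen (V i)) (hcover : ⋃ i, V i = univ)
    (hsec : ∀ i, HasLocalSectionPi f (V i)) : tcPav f ≤ n := by
  refine sInf_le ⟨n, rfl, fun k => ⋃ (j : Fin (n + 1)) (_ : j.castSucc < k), V j,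
    fun k => isOpen_biUnion fun j _ => hV j, by simp, ?_, ?_, fun i => (hsec i).mono ?_⟩
  · refine eq_univ_of_forall fun z => ?_
    obtain ⟨j, hj⟩ := mem_iUnion.1 (hcover ▸ mem_univ z)
    exact mem_iUnion₂.2 ⟨j, Fin.castSucc_lt_last j, hj⟩
  · exact fun i k hik => iUnion₂_mono' fun j hj => ⟨j, hj.trans_le hik, le_rfl⟩
  · rintro z ⟨hz, hz'⟩
    obtain ⟨j, hj, hzj⟩ := mem_iUnion₂.1 hz
    obtain rfl | hji := (Fin.castSucc_lt_succ_iff.1 hj).eq_or_lt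
    · exact hzj
    · exact absurd (mem_iUnion₂.2 ⟨j, Fin.castSucc_lt_castSucc_iff.2 hji, hzj⟩) hz'

theorem tcPav_eq_generalized_general (X : Type u) (Y : Type v) [TopologicalSpace X]
    [TopologicalSpace Y] [CompactSpace X] [CompactSpace Y]
    (hX : IsANR X) (hY : IsANR Y) (f : C(X, Y)) (hf : IsFibration f) :
    tcPav f = sInf {m : ℕ∞ | ∃ n : ℕ, m = n ∧ ∃ A : Fin (n + 1) → Set (X × Y),
      (⋃ i, A i) = Set.univ ∧ ∀ i, HasLocalSectionPi f (A i)} := by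
  refine le_antisymm (le_sInf ?_) (sInf_le_sInf ?_)
  · rintro _ ⟨n, rfl, A, hA, hsec⟩
    choose V hV hAV hVsec using fun i => (hsec i).exists_isOpen_superset hX hY hf
    exact tcPav_le_of_isOpen_cover V hV (univ_subset_iff.1 (hA ▸ iUnion_mono hAV)) hVsec
  · rintro _ ⟨n, rfl, U, -, h₀, hlast, -, hsec⟩
    exact ⟨n, rfl, _, iUnion_succ_sdiff_castSucc_eq_univ U h₀ hlast, hsec⟩

/-- (Pavešić) For a fibration `f : X → Y` between compact ANR spaces (a continuous
surjection between path-connected spaces), `tc(f)` equals the least `n` such that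
`X × Y` is covered by `n+1` arbitrary subsets each admitting a continuous local
section of `π_f`. -/
theorem tcPav_eq_generalized (X : Type u) (Y : Type v) [TopologicalSpace X]
    [TopologicalSpace Y] [CompactSpace X] [CompactSpace Y]
    [PathConnectedSpace X] [PathConnectedSpace Y]
    (hX : IsANR X) (hY : IsANR Y) (f : C(X, Y)) (hf : IsFibration f)
    (hsurj : Function.Surjective f) :
    tcPav f = sInf {m : ℕ∞ | ∃ n : ℕ, m = n ∧ ∃ A : Fin (n + 1) → Set (X × Y),
      (⋃ i, A i) = Set.univ ∧ ∀ i, HasLocalSectionPi f (A i)} :=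
  tcPav_eq_generalized_general X Y hX hY f hf
end
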